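/- arXiv:1706.00151 — 6 statements merged into one kernel-verified Lean document; each statement's English description precedes it below -/
import Mathlib

section
/- Let G be a finite abelian group equipped with a ℤ-bilinear pairing b : G × G → ℚ/ℤ that is alternating (b(x,x) = 0 for all x ∈ G) and nondegenerate (the homomorphism G → Hom(G, ℚ/ℤ) sending x to b(x, −) is injective). Then the order of G is a perfect square. -/
/-!
Choose `x` of maximal order `N = exp G`. By nondegeneracy `b x` also has order `N`, so some
`t = b x y` has order `N`; since the `N`-torsion of `ℚ/ℤ` is cyclic of order `N`, it is
generated by `t`. Hence `g ↦ (b x g, b y g)` maps `G` onto `⟨t⟩ × ⟨t⟩`, its kernel `K` has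
`|G| = N² |K|`, and `G = ⟨x, y⟩ + K` with `⟨x, y⟩` orthogonal to `K`, so `b` restricts to a
nondegenerate alternating pairing on `K`. Induct on `|G|`.
-/

open AddSubgroup

theorem mem_zmultiples_of_addOrderOf_eq_of_nsmul_eq_zero {A : Type*} [AddCommGroup A]
    {N : ℕ} {s t : A} (htors : {x : A | N • x = 0}.encard ≤ N) (hN : 0 < N)
    (hs : addOrderOf s = N) (ht : N • t = 0) : t ∈ zmultiples s := by
  have hsub : (zmultiples s : Set A) ⊆ {x | N • x = 0} := by
    rintro _ ⟨k, rfl⟩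
    rw [Set.mem_ofPred_eq, smul_comm, ← hs, addOrderOf_nsmul_eq_zero, smul_zero]
  have : Finite (zmultiples s) := Nat.finite_of_card_ne_zero (by rw [Nat.card_zmultiples]; omega)
  have hcard : (zmultiples s : Set A).encard = N := by
    rw [← ENat.card_coe_set_eq, SetLike.coe_sort_coe, ENat.card_eq_coe_natCard,
      Nat.card_zmultiples, hs]
  rw [← SetLike.mem_coe, (Set.toFinite _).eq_of_subset_of_encard_le hsub (htors.trans hcard.ge)]
  exact ht

theorem AddCircle.mem_zmultiples_of_addOrderOf_eq_of_nsmul_eq_zero {N : ℕ}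
    {s t : AddCircle (1 : ℚ)} (hN : 0 < N) (hs : addOrderOf s = N) (ht : N • t = 0) :
    t ∈ zmultiples s :=
  _root_.mem_zmultiples_of_addOrderOf_eq_of_nsmul_eq_zero
    (AddCircle.card_torsion_le_of_isSMulRegular _ N hN.ne'
      (.of_right_eq_zero_of_smul fun _ ↦ by simp [hN.ne'])) hN hs ht

namespace AddMonoidHom

variable {G A : Type*} [AddCommGroup G] [AddCommGroup A]

theorem addOrderOf_eq_exponent_range (φ : G →+ A) :
    addOrderOf φ = AddMonoid.exponent φ.range := by
  refine Nat.dvd_right_iff_eq.mp fun n ↦ ?_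
  rw [addOrderOf_dvd_iff_nsmul_eq_zero, AddMonoid.exponent_dvd_iff_forall_nsmul_eq_zero,
    AddMonoidHom.ext_iff, Subtype.forall]
  simp

theorem exists_addOrderOf_apply_eq [Finite G] (φ : G →+ A) :
    ∃ g, addOrderOf (φ g) = addOrderOf φ := by
  have : Finite φ.range := Finite.of_surjective _ φ.rangeRestrict_surjective
  obtain ⟨s, hs⟩ := AddMonoid.exists_addOrderOf_eq_exponent (G := φ.range) .of_finite
  obtain ⟨g, hg⟩ := s.2
  refine ⟨g, ?_⟩
  rw [hg, addOrderOf_eq_exponent_range, ← hs]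
  exact addOrderOf_injective φ.range.subtype Subtype.val_injective s

theorem apply_apply_eq_neg_of_apply_self_eq_zero (b : G →+ G →+ A) (halt : ∀ x, b x x = 0)
    (x y : G) : b x y = -b y x := by
  have h := halt (x + y)
  simp only [map_add, add_apply, halt, zero_add, add_zero] at h
  exact eq_neg_of_add_eq_zero_right h

theorem exists_addOrderOf_apply_apply_eq_exponent [Finite G] (b : G →+ G →+ A)
    (hb : Function.Injective b) : ∃ x y, addOrderOf (b x y) = AddMonoid.exponent G := by
  obtain ⟨x, hx⟩ := AddMonoid.exists_addOrderOf_eq_exponent (G := G) .of_finite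
  obtain ⟨y, hy⟩ := (b x).exists_addOrderOf_apply_eq
  exact ⟨x, y, by rw [hy, addOrderOf_injective b hb, hx]⟩

section

variable [Finite G] (b : G →+ G →+ AddCircle (1 : ℚ)) (halt : ∀ x, b x x = 0) {x y : G}
  (hxy : addOrderOf (b x y) = AddMonoid.exponent G)

include halt hxy

theorem range_prod_eq_prod_zmultiples :
    ((b x).prod (b y)).range = (zmultiples (b x y)).prod (zmultiples (b x y)) := by
  have hN : 0 < AddMonoid.exponent G := Nat.pos_of_ne_zero AddMonoid.exponent_ne_zero_of_finite
  have hyx : b y x = -b x y := apply_apply_eq_neg_of_apply_self_eq_zero b halt y x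
  apply le_antisymm
  · rintro _ ⟨g, rfl⟩
    refine ⟨?_, ?_⟩ <;>
    · refine AddCircle.mem_zmultiples_of_addOrderOf_eq_of_nsmul_eq_zero hN hxy ?_
      simp [← map_nsmul, AddMonoid.exponent_nsmul_eq_zero]
  · rintro ⟨_, _⟩ ⟨⟨a, rfl⟩, ⟨c, rfl⟩⟩
    refine ⟨a • y - c • x, ?_⟩
    simp [halt, hyx]

theorem natCard_eq_mul_natCard_ker_prod :
    Nat.card G =
      AddMonoid.exponent G * AddMonoid.exponent G * Nat.card ((b x).prod (b y)).ker := by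
  rw [← ((b x).prod (b y)).ker.card_mul_index, index_ker, range_prod_eq_prod_zmultiples b halt hxy,
    Nat.card_congr (prodEquiv _ _).toEquiv, Nat.card_prod, Nat.card_zmultiples, hxy, mul_comm]

theorem exists_sub_mem_ker_prod (g : G) :
    ∃ a c : ℤ, g - (a • y - c • x) ∈ ((b x).prod (b y)).ker := by
  have hyx : b y x = -b x y := apply_apply_eq_neg_of_apply_self_eq_zero b halt y x
  have hg : (b x).prod (b y) g ∈ ((b x).prod (b y)).range := ⟨g, rfl⟩
  rw [range_prod_eq_prod_zmultiples b halt hxy] at hg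
  obtain ⟨⟨a, ha⟩, ⟨c, hc⟩⟩ := hg
  refine ⟨a, c, ?_⟩
  simp [ha, hc, halt, hyx]

theorem injective_compl₂_ker_prod (hb : Function.Injective b) :
    Function.Injective
      ((b.comp ((b x).prod (b y)).ker.subtype).compl₂ ((b x).prod (b y)).ker.subtype) := by
  rw [injective_iff_map_eq_zero]
  intro h hh
  obtain ⟨hxh, hyh⟩ : b x h = 0 ∧ b y h = 0 := Prod.ext_iff.mp (mem_ker.mp h.2)
  have hhx : b h x = 0 := by rw [apply_apply_eq_neg_of_apply_self_eq_zero b halt, hxh, neg_zero]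
  have hhy : b h y = 0 := by rw [apply_apply_eq_neg_of_apply_self_eq_zero b halt, hyh, neg_zero]
  suffices b h = 0 from Subtype.ext (hb (this.trans (map_zero b).symm))
  ext g
  obtain ⟨a, c, hk⟩ := exists_sub_mem_ker_prod b halt hxy g
  have := DFunLike.congr_fun hh ⟨_, hk⟩
  simpa [hhx, hhy] using this

end

end AddMonoidHom

theorem isSquare_natCard_of_apply_self_eq_zero_of_injective {G : Type*} [AddCommGroup G]
    [Finite G] (b : G →+ G →+ AddCircle (1 : ℚ)) (halt : ∀ x, b x x = 0)
    (hb : Function.Injective b) : IsSquare (Nat.card G) := by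
  induction hn : Nat.card G using Nat.strong_induction_on generalizing G with
  | _ n ih =>
  rcases subsingleton_or_nontrivial G with _ | _
  · rw [← hn, Nat.card_of_subsingleton (0 : G)]
    exact ⟨1, rfl⟩
  obtain ⟨x, y, hxy⟩ := b.exists_addOrderOf_apply_apply_eq_exponent hb
  set K := ((b x).prod (b y)).ker
  set N := AddMonoid.exponent G
  have hcard : n = N * N * Nat.card K := hn ▸ b.natCard_eq_mul_natCard_ker_prod halt hxy
  have hlt : Nat.card K < n := by
    have h2N : 2 * 2 ≤ N * N := Nat.mul_le_mul AddMonoid.one_lt_exponent AddMonoid.one_lt_exponent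
    have hK : 0 < Nat.card K := Nat.card_pos
    rw [hcard]
    nlinarith
  obtain ⟨r, hr⟩ := ih _ hlt ((b.comp K.subtype).compl₂ K.subtype) (fun h ↦ halt h)
    (b.injective_compl₂_ker_prod halt hxy hb) rfl
  exact ⟨N * r, by rw [hcard, hr]; ring⟩

/-- A finite abelian group with a nondegenerate alternating ℤ-bilinear pairing
valued in ℚ/ℤ has order a perfect square. -/
theorem finite_abelian_group_with_nondegenerate_alternating_pairing_has_square_order
    {G : Type*} [AddCommGroup G] [Fintype G]
    (b : G →+ G →+ AddCircle (1 : ℚ))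
    (halt : ∀ x : G, b x x = 0)
    (hnd : Function.Injective b) :
    IsSquare (Fintype.card G) := by
  simpa only [Nat.card_eq_fintype_card] using
    isSquare_natCard_of_apply_self_eq_zero_of_injective b halt hnd
end

section
/- Assume 2^n = 0 in R for some integer n ≥ 1. Fix integers r and i ≥ 0 with r − i even. Then the assignment u ↦ 2^{n−1}(u ⌣_i u) descends to a well-defined operation Sq̃_i : H^r(C) → H^{2r−i}(C); that is: (a) if u ∈ C^r satisfies du = 0, then d(2^{n−1}(u ⌣_i u)) = 0; and (b) if u, u′ ∈ C^r are cocycles with u − u′ a coboundary, then 2^{n−1}(u ⌣_i u) − 2^{n−1}(u′ ⌣_i u′) is a coboundary. -/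
/-!
Since `2 · 2^(n-1) = 0`, multiplying by `2^(n-1)` kills every sign in Steenrod's coboundary
formula and every term that occurs twice, so after this multiplication the formula reads
`d(a ⌣ᵢ b) = da ⌣ᵢ b + a ⌣ᵢ db + a ⌣ᵢ₋₁ b + b ⌣ᵢ₋₁ a`. For a cocycle `u` this makes
`d(u ⌣ᵢ u)` twice a cochain, and for `u = v + dw` with `v` a cocycle the cochain
`w ⌣ᵢ v + v ⌣ᵢ w + dw ⌣ᵢ w + w ⌣ᵢ₋₁ w` has coboundary `(v + dw) ⌣ᵢ (v + dw) - v ⌣ᵢ v`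
up to twice a cochain.
-/

section TwoTorsion

variable {R : Type*} [CommRing R] {M : Type*} [AddCommGroup M] [Module R M]

theorem two_pow_pred_mul_two_eq_zero {n : ℕ} (h : (2 : R) ^ n = 0) :
    (2 : R) ^ (n - 1) * 2 = 0 := by
  rcases n with _ | n
  · have : Subsingleton R := subsingleton_of_zero_eq_one (by simpa using h.symm)
    exact Subsingleton.elim _ _
  · simpa [← pow_succ] using h

variable {c : R}

theorem smul_add_self_of_mul_two_eq_zero (hc : c * 2 = 0) (x : M) : c • (x + x) = 0 := by
  rw [← two_smul R x, smul_smul, hc, zero_smul]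

theorem smul_neg_of_mul_two_eq_zero (hc : c * 2 = 0) (x : M) : c • -x = c • x := by
  rw [smul_neg, neg_eq_iff_add_eq_zero, ← smul_add, smul_add_self_of_mul_two_eq_zero hc]

theorem smul_units_zsmul_of_mul_two_eq_zero (hc : c * 2 = 0) (ε : ℤˣ) (x : M) :
    c • ((ε : ℤ) • x) = c • x := by
  rcases Int.units_eq_one_or ε with rfl | rfl
  · rw [Units.val_one, one_smul]
  · rw [Units.val_neg, Units.val_one, neg_smul, one_smul, smul_neg_of_mul_two_eq_zero hc]

theorem smul_eq_smul_of_sub_eq_add_self (hc : c * 2 = 0) {x y z : M} (h : x - y = z + z) :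
    c • x = c • y := by
  rw [← sub_eq_zero, ← smul_sub, h, smul_add_self_of_mul_two_eq_zero hc]

end TwoTorsion

structure CupICochainComplex (R : Type*) [CommRing R] (M : Type*) [AddCommGroup M] [Module R M]
    where
  C : ℤ → Submodule R M
  d : M →ₗ[R] M
  d_mem : ∀ (j : ℤ), ∀ x ∈ C j, d x ∈ C (j + 1)
  d_d : ∀ x : M, d (d x) = 0
  cup : ℤ → M →ₗ[R] M →ₗ[R] M
  cup_of_neg : ∀ i : ℤ, i < 0 → cup i = 0
  cup_mem : ∀ (i r s : ℤ), ∀ u ∈ C r, ∀ v ∈ C s, cup i u v ∈ C (r + s - i)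
  d_cup : ∀ (i r s : ℤ), 0 ≤ i → ∀ u ∈ C r, ∀ v ∈ C s,
    d (cup i u v) =
      (Int.negOnePow i : ℤ) • cup i (d u) v
        + (Int.negOnePow (i + r) : ℤ) • cup i u (d v)
        - (Int.negOnePow i : ℤ) • cup (i - 1) u v
        - (Int.negOnePow (r * s) : ℤ) • cup (i - 1) v u

namespace CupICochainComplex

variable {R : Type*} [CommRing R] {M : Type*} [AddCommGroup M] [Module R M]
  (K : CupICochainComplex R M) {c : R}

theorem d_mem_of_mem_pred {r : ℤ} {w : M} (hw : w ∈ K.C (r - 1)) : K.d w ∈ K.C r := by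
  simpa using K.d_mem (r - 1) w hw

theorem cup_mem_of_eq {i r s k : ℤ} {u v : M} (hu : u ∈ K.C r) (hv : v ∈ K.C s)
    (h : r + s - i = k) : K.cup i u v ∈ K.C k :=
  h ▸ K.cup_mem i r s u hu v hv

theorem smul_d_cup (hc : c * 2 = 0) {r s : ℤ} {u v : M} (hu : u ∈ K.C r) (hv : v ∈ K.C s)
    (i : ℤ) :
    c • K.d (K.cup i u v) =
      c • (K.cup i (K.d u) v + K.cup i u (K.d v) + K.cup (i - 1) u v + K.cup (i - 1) v u) := by
  rcases lt_or_ge i 0 with hi | hi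
  · simp [K.cup_of_neg i hi, K.cup_of_neg (i - 1) (by omega)]
  · rw [K.d_cup i r s hi u hu v hv]
    simp only [sub_eq_add_neg, smul_add, smul_neg_of_mul_two_eq_zero hc,
      smul_units_zsmul_of_mul_two_eq_zero hc]

theorem d_smul_cup_self_eq_zero (hc : c * 2 = 0) {r : ℤ} {u : M} (hu : u ∈ K.C r)
    (hdu : K.d u = 0) (i : ℤ) : K.d (c • K.cup i u u) = 0 := by
  rw [map_smul, K.smul_d_cup hc hu hu, hdu, map_zero, LinearMap.zero_apply, map_zero, zero_add,
    zero_add, smul_add_self_of_mul_two_eq_zero hc]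

def cupSquareHomotopy (i : ℤ) (v w : M) : M :=
  K.cup i w v + K.cup i v w + K.cup i (K.d w) w + K.cup (i - 1) w w

theorem cupSquareHomotopy_mem {r : ℤ} {v w : M} (hv : v ∈ K.C r) (hw : w ∈ K.C (r - 1))
    (i : ℤ) : K.cupSquareHomotopy i v w ∈ K.C (2 * r - i - 1) := by
  have hdw := K.d_mem_of_mem_pred hw
  exact add_mem (add_mem (add_mem (K.cup_mem_of_eq hw hv (by ring))
    (K.cup_mem_of_eq hv hw (by ring))) (K.cup_mem_of_eq hdw hw (by ring)))
    (K.cup_mem_of_eq hw hw (by ring))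

theorem d_smul_cupSquareHomotopy (hc : c * 2 = 0) {r : ℤ} {v w : M} (hv : v ∈ K.C r)
    (hdv : K.d v = 0) (hw : w ∈ K.C (r - 1)) (i : ℤ) :
    K.d (c • K.cupSquareHomotopy i v w) =
      c • K.cup i (v + K.d w) (v + K.d w) - c • K.cup i v v := by
  have hdw := K.d_mem_of_mem_pred hw
  simp only [cupSquareHomotopy, map_smul, map_add, smul_add, K.smul_d_cup hc hw hv,
    K.smul_d_cup hc hv hw, K.smul_d_cup hc hdw hw, K.smul_d_cup hc hw hw, hdv, K.d_d]
  simp only [← smul_add, ← smul_sub]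
  refine smul_eq_smul_of_sub_eq_add_self hc (z := K.cup (i - 1) w v + K.cup (i - 1) v w
    + K.cup (i - 1) (K.d w) w + K.cup (i - 1) w (K.d w) + K.cup (i - 1 - 1) w w) ?_
  simp only [map_zero, LinearMap.zero_apply, LinearMap.add_apply]
  abel

end CupICochainComplex

theorem generalized_steenrod_square_even_case_well_defined_general
    {R : Type*} [CommRing R] {M : Type*} [AddCommGroup M] [Module R M]
    (C : ℤ → Submodule R M)
    (d : M →ₗ[R] M)
    (hd : ∀ (j : ℤ), ∀ x ∈ C j, d x ∈ C (j + 1))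
    (hdd : ∀ x : M, d (d x) = 0)
    (cup : ℤ → M →ₗ[R] M →ₗ[R] M)
    (hcup_neg : ∀ i : ℤ, i < 0 → cup i = 0)
    (hcup_mem : ∀ (i r s : ℤ), ∀ u ∈ C r, ∀ v ∈ C s, cup i u v ∈ C (r + s - i))
    (hcob : ∀ (i r s : ℤ), 0 ≤ i → ∀ u ∈ C r, ∀ v ∈ C s,
      d (cup i u v) =
        (Int.negOnePow i : ℤ) • cup i (d u) v
          + (Int.negOnePow (i + r) : ℤ) • cup i u (d v)
          - (Int.negOnePow i : ℤ) • cup (i - 1) u v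
          - (Int.negOnePow (r * s) : ℤ) • cup (i - 1) v u)
    (n : ℕ) (h2n : (2 : R) ^ n = 0)
    (r i : ℤ) :
    (∀ u ∈ C r, d u = 0 → d ((2 : R) ^ (n - 1) • cup i u u) = 0) ∧
    (∀ u ∈ C r, ∀ u' ∈ C r, d u = 0 → d u' = 0 →
      (∃ w ∈ C (r - 1), u - u' = d w) →
      ∃ w ∈ C (2 * r - i - 1),
        (2 : R) ^ (n - 1) • cup i u u - (2 : R) ^ (n - 1) • cup i u' u' = d w) := by
  let K : CupICochainComplex R M := ⟨C, d, hd, hdd, cup, hcup_neg, hcup_mem, hcob⟩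
  have hc := two_pow_pred_mul_two_eq_zero h2n
  refine ⟨fun u hu hdu ↦ K.d_smul_cup_self_eq_zero hc hu hdu i, ?_⟩
  rintro u - v hv - hdv ⟨w, hw, huv⟩
  obtain rfl : u = v + d w := eq_add_of_sub_eq' huv
  exact ⟨_, Submodule.smul_mem _ _ (K.cupSquareHomotopy_mem hv hw i),
    (K.d_smul_cupSquareHomotopy hc hv hdv hw i).symm⟩

/-- Generalized Steenrod squares in even total degree: if `2^n = 0` in `R` and
`r - i` is even, then `u ↦ 2^(n-1) • (u ⌣ᵢ u)` sends cocycles to cocycles and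
respects coboundaries, hence descends to `Sq̃ᵢ : H^r(C) → H^(2r-i)(C)`. -/
theorem generalized_steenrod_square_even_case_well_defined
    {R : Type*} [CommRing R] {M : Type*} [AddCommGroup M] [Module R M]
    (C : ℤ → Submodule R M)
    (d : M →ₗ[R] M)
    (hd : ∀ (j : ℤ), ∀ x ∈ C j, d x ∈ C (j + 1))
    (hdd : ∀ x : M, d (d x) = 0)
    (cup : ℤ → M →ₗ[R] M →ₗ[R] M)
    (hcup_neg : ∀ i : ℤ, i < 0 → cup i = 0)
    (hcup_mem : ∀ (i r s : ℤ), ∀ u ∈ C r, ∀ v ∈ C s, cup i u v ∈ C (r + s - i))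
    (hcob : ∀ (i r s : ℤ), 0 ≤ i → ∀ u ∈ C r, ∀ v ∈ C s,
      d (cup i u v) =
        (Int.negOnePow i : ℤ) • cup i (d u) v
          + (Int.negOnePow (i + r) : ℤ) • cup i u (d v)
          - (Int.negOnePow i : ℤ) • cup (i - 1) u v
          - (Int.negOnePow (r * s) : ℤ) • cup (i - 1) v u)
    (n : ℕ) (hn : 1 ≤ n) (h2n : (2 : R) ^ n = 0)
    (r i : ℤ) (hi : 0 ≤ i) (hri : Even (r - i)) :
    (∀ u ∈ C r, d u = 0 → d ((2 : R) ^ (n - 1) • cup i u u) = 0) ∧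
    (∀ u ∈ C r, ∀ u' ∈ C r, d u = 0 → d u' = 0 →
      (∃ w ∈ C (r - 1), u - u' = d w) →
      ∃ w ∈ C (2 * r - i - 1),
        (2 : R) ^ (n - 1) • cup i u u - (2 : R) ^ (n - 1) • cup i u' u' = d w) :=
  generalized_steenrod_square_even_case_well_defined_general C d hd hdd cup hcup_neg hcup_mem hcob n
    h2n r i
end

section
/- Let n ≥ 1 and k be integers, and let a ∈ C^{2k} and b ∈ C^{2k+1} satisfy da = 2^n·b and db = 0. Then d(2^{n−1}·a·a + 2^{2n−1}·(a ⌣₁ b)) = 2^{2n}·(a·b − 2^{n−1}·(b ⌣₁ b)). -/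
/-!
Since `a` has even degree and `b` is a cocycle, the Leibniz rule and the cup-1 formula reduce to
`d(a·a) = 2^n (b·a + a·b)` and `d(a ⌣₁ b) = -2^n (b ⌣₁ b) + a·b − b·a`. In the combination
`2^(n-1)·a·a + 2^(2n-1)·(a ⌣₁ b)` the graded commutators `b·a` cancel and the two copies of
`2^(2n-1)·a·b` add up to `2^(2n)·a·b`.
-/

section

variable {A : Type*} [Ring A] {C : ℤ → AddSubgroup A} {d : A →+ A}

theorem d_mul_of_even
    (hleibniz : ∀ (r : ℤ), ∀ x ∈ C r, ∀ y : A,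
      d (x * y) = d x * y + (Int.negOnePow r : ℤ) • (x * d y))
    {r : ℤ} (hr : Even r) {x : A} (hx : x ∈ C r) (y : A) :
    d (x * y) = d x * y + x * d y := by
  rw [hleibniz r x hx y, Int.negOnePow_even r hr, Units.val_one, one_zsmul]

theorem d_cup1_of_even_mul_of_d_eq_zero {cup1 : A →+ A →+ A}
    (hcup1 : ∀ (r s : ℤ), ∀ u ∈ C r, ∀ v ∈ C s,
      d (cup1 u v) = - cup1 (d u) v + (Int.negOnePow (1 + r) : ℤ) • cup1 u (d v)
        + u * v - (Int.negOnePow (r * s) : ℤ) • (v * u))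
    {r s : ℤ} (hrs : Even (r * s)) {u v : A} (hu : u ∈ C r) (hv : v ∈ C s) (hdv : d v = 0) :
    d (cup1 u v) = - cup1 (d u) v + u * v - v * u := by
  rw [hcup1 r s u hu v hv, hdv, map_zero, smul_zero, add_zero, Int.negOnePow_even _ hrs,
    Units.val_one, one_zsmul]

end

theorem higher_bockstein_cochain_identity_general
    {A : Type*} [Ring A]
    (C : ℤ → AddSubgroup A)
    (d : A →+ A)
    (hleibniz : ∀ (r : ℤ), ∀ x ∈ C r, ∀ y : A,
      d (x * y) = d x * y + (Int.negOnePow r : ℤ) • (x * d y))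
    (cup1 : A →+ A →+ A)
    (hcup1 : ∀ (r s : ℤ), ∀ u ∈ C r, ∀ v ∈ C s,
      d (cup1 u v) = - cup1 (d u) v + (Int.negOnePow (1 + r) : ℤ) • cup1 u (d v)
        + u * v - (Int.negOnePow (r * s) : ℤ) • (v * u))
    (n : ℕ) (hn : 1 ≤ n) (k : ℤ)
    (a b : A) (ha : a ∈ C (2 * k)) (hb : b ∈ C (2 * k + 1))
    (hda : d a = (2 ^ n : ℤ) • b) (hdb : d b = 0) :
    d ((2 ^ (n - 1) : ℤ) • (a * a) + (2 ^ (2 * n - 1) : ℤ) • cup1 a b)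
      = (2 ^ (2 * n) : ℤ) • (a * b - (2 ^ (n - 1) : ℤ) • cup1 b b) := by
  have hdaa : d (a * a) = (2 ^ n : ℤ) • (b * a) + (2 ^ n : ℤ) • (a * b) := by
    rw [d_mul_of_even hleibniz (even_two_mul k) ha, hda, smul_mul_assoc, mul_smul_comm]
  have hdab : d (cup1 a b) = - (2 ^ n : ℤ) • cup1 b b + a * b - b * a := by
    rw [d_cup1_of_even_mul_of_d_eq_zero hcup1 ((even_two_mul k).mul_right _) ha hb hdb, hda,
      map_zsmul, AddMonoidHom.zsmul_apply, neg_smul]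
  obtain ⟨m, rfl⟩ := Nat.exists_eq_add_of_le' hn
  rw [show 2 * (m + 1) - 1 = 2 * m + 1 by omega, Nat.add_sub_cancel, map_add, map_zsmul,
    map_zsmul, hdaa, hdab]
  module

/-- The cochain-level identity at the core of the higher-Bockstein identity
`β₂(2^(n-1)x²) = [x·β(x) − Sq̃^(2k)(β(x))]`: in a ℤ-graded differential graded
ring with a cup-1 commutativity homotopy, if `a ∈ C^(2k)`, `b ∈ C^(2k+1)`,
`da = 2^n·b` and `db = 0`, then
`d(2^(n-1)·a·a + 2^(2n-1)·(a ⌣₁ b)) = 2^(2n)·(a·b − 2^(n-1)·(b ⌣₁ b))`. -/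
theorem higher_bockstein_cochain_identity
    {A : Type*} [Ring A]
    (C : ℤ → AddSubgroup A)
    (d : A →+ A)
    (hd : ∀ (j : ℤ), ∀ x ∈ C j, d x ∈ C (j + 1))
    (hdd : ∀ x : A, d (d x) = 0)
    (hone : (1 : A) ∈ C 0)
    (hmul : ∀ (r s : ℤ), ∀ x ∈ C r, ∀ y ∈ C s, x * y ∈ C (r + s))
    (hleibniz : ∀ (r : ℤ), ∀ x ∈ C r, ∀ y : A,
      d (x * y) = d x * y + (Int.negOnePow r : ℤ) • (x * d y))
    (cup1 : A →+ A →+ A)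
    (hcup1_mem : ∀ (r s : ℤ), ∀ u ∈ C r, ∀ v ∈ C s, cup1 u v ∈ C (r + s - 1))
    (hcup1 : ∀ (r s : ℤ), ∀ u ∈ C r, ∀ v ∈ C s,
      d (cup1 u v) = - cup1 (d u) v + (Int.negOnePow (1 + r) : ℤ) • cup1 u (d v)
        + u * v - (Int.negOnePow (r * s) : ℤ) • (v * u))
    (n : ℕ) (hn : 1 ≤ n) (k : ℤ)
    (a b : A) (ha : a ∈ C (2 * k)) (hb : b ∈ C (2 * k + 1))
    (hda : d a = (2 ^ n : ℤ) • b) (hdb : d b = 0) :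
    d ((2 ^ (n - 1) : ℤ) • (a * a) + (2 ^ (2 * n - 1) : ℤ) • cup1 a b)
      = (2 ^ (2 * n) : ℤ) • (a * b - (2 ^ (n - 1) : ℤ) • cup1 b b) :=
  higher_bockstein_cochain_identity_general C d hleibniz cup1 hcup1 n hn k a b ha hb hda hdb
end

section
/- Fix integers m and n ≥ 1, and let z be an m-cocycle of C/2^nC whose class satisfies β[z] = 0 in H^{m+1}(C/2^nC). Then: (a) there exist a ∈ C^m lifting z and b ∈ C^m such that da − 2^n·db ∈ 2^{2n}·C^{m+1}; (b) for any such a and b, the element (da − 2^n·db)/2^{2n} ∈ C^{m+1} is a cocycle, and its cohomology class in H^{m+1}(C), taken modulo the subgroup β̃(H^m(C/2^nC)), is independent of all choices: of the representative cocycle z of the class [z] ∈ H^m(C/2^nC), of the lift a, and of b; (c) 2^{2n} times the class of (da − 2^n·db)/2^{2n} is already zero in H^{m+1}(C). (This establishes that the higher Bockstein β̃₂ : ker β → H^{m+1}(C)/Im β̃ is well defined and that its image is killed by 2^{2n}.) -/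
/-!
Everything follows from the identity `2^(2n) • c = d (a - 2^n • b)`: it gives (c) at once,
and `d c = 0` after cancelling `2^(2n)` in the torsion-free group `C^(m+2)`. For (b), if
`a = z + 2^n s`, `a' = z' + 2^n s'` and `z - z' = d u + 2^n t`, then applying `d` and cancelling
one factor `2^n` shows `d x = 2^n • (c - c')` for `x = t + s - s' - (b - b')`, i.e. `c - c'` is
itself `β̃[x]`.
-/

section BocksteinCochains

variable {M : Type*} [AddCommGroup M] {d : M →+ M}

theorem eq_of_zsmul_eq_zsmul_of_torsionFree {S : AddSubgroup M}
    (htf : ∀ x ∈ S, ∀ q : ℤ, q • x = 0 → q = 0 ∨ x = 0) {q : ℤ} (hq : q ≠ 0)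
    {x y : M} (hx : x ∈ S) (hy : y ∈ S) (h : q • x = q • y) : x = y := by
  rcases htf (x - y) (sub_mem hx hy) q (by rw [smul_sub, h, sub_self]) with hq' | hxy
  · exact absurd hq' hq
  · exact sub_eq_zero.mp hxy

theorem d_eq_zero_of_zsmul_eq_d (hdd : ∀ x : M, d (d x) = 0) {S : AddSubgroup M}
    (htf : ∀ x ∈ S, ∀ q : ℤ, q • x = 0 → q = 0 ∨ x = 0) {q : ℤ} (hq : q ≠ 0)
    {c e : M} (hc : d c ∈ S) (h : q • c = d e) : d c = 0 :=
  eq_of_zsmul_eq_zsmul_of_torsionFree htf hq hc (zero_mem S) <| by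
    rw [← map_zsmul, h, hdd, smul_zero]

theorem zsmul_d_eq_zsmul_zsmul_sub_of_lifts (hdd : ∀ x : M, d (d x) = 0) {q : ℤ}
    {z z' u t a a' s s' b b' c c' : M}
    (hzz' : z - z' = d u + q • t) (ha : a = z + q • s) (ha' : a' = z' + q • s')
    (hc : d a - q • d b = q ^ 2 • c) (hc' : d a' - q • d b' = q ^ 2 • c') :
    q • d (t + s - s' - (b - b')) = q • (q • (c - c')) := by
  have hdz : d z = d z' + q • d t := by
    rw [← sub_eq_iff_eq_add', ← map_sub, hzz', map_add, map_zsmul, hdd, zero_add]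
  calc q • d (t + s - s' - (b - b'))
      = (d a - q • d b) - (d a' - q • d b') := by
        simp only [ha, ha', map_add, map_sub, map_zsmul, hdz]
        module
    _ = q • (q • (c - c')) := by rw [hc, hc']; module

end BocksteinCochains

theorem higher_bockstein_beta_two_well_defined_general
    {M : Type*} [AddCommGroup M]
    (C : ℤ → AddSubgroup M)
    (d : M →+ M)
    (hd : ∀ (j : ℤ), ∀ x ∈ C j, d x ∈ C (j + 1))
    (hdd : ∀ x : M, d (d x) = 0)
    (htf : ∀ (j : ℤ), ∀ x ∈ C j, ∀ q : ℤ, q • x = 0 → q = 0 ∨ x = 0)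
    (m : ℤ) (n : ℕ)
    (z : M) (hz : z ∈ C m)
    (hbeta : ∃ w ∈ C m, ∃ t ∈ C (m + 1),
      d z = (2 ^ n : ℤ) • (d w + (2 ^ n : ℤ) • t)) :
    -- (a) existence of suitable lifts
    ((∃ a ∈ C m, ∃ b ∈ C m, (∃ s ∈ C m, a = z + (2 ^ n : ℤ) • s) ∧
        ∃ c ∈ C (m + 1), d a - (2 ^ n : ℤ) • d b = (2 ^ (2 * n) : ℤ) • c) ∧
    -- (b) independence of all choices, modulo Im β̃
    (∀ z' ∈ C m, ∀ a ∈ C m, ∀ b ∈ C m, ∀ a' ∈ C m, ∀ b' ∈ C m,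
      ∀ c ∈ C (m + 1), ∀ c' ∈ C (m + 1),
      (∃ w ∈ C (m - 1), ∃ t ∈ C m, z - z' = d w + (2 ^ n : ℤ) • t) →
      (∃ s ∈ C m, a = z + (2 ^ n : ℤ) • s) →
      (∃ s ∈ C m, a' = z' + (2 ^ n : ℤ) • s) →
      d a - (2 ^ n : ℤ) • d b = (2 ^ (2 * n) : ℤ) • c →
      d a' - (2 ^ n : ℤ) • d b' = (2 ^ (2 * n) : ℤ) • c' →
      d c = 0 ∧ d c' = 0 ∧
        ∃ x ∈ C m, ∃ y ∈ C (m + 1), d x = (2 ^ n : ℤ) • y ∧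
          ∃ w ∈ C m, c - c' = y + d w) ∧
    -- (c) the image of β̃₂ is killed by 2^(2n)
    (∀ a ∈ C m, ∀ b ∈ C m, ∀ c ∈ C (m + 1),
      (∃ s ∈ C m, a = z + (2 ^ n : ℤ) • s) →
      d a - (2 ^ n : ℤ) • d b = (2 ^ (2 * n) : ℤ) • c →
      ∃ w ∈ C m, (2 ^ (2 * n) : ℤ) • c = d w)) := by
  have hpow : (2 ^ (2 * n) : ℤ) = (2 ^ n) ^ 2 := pow_mul' 2 2 n
  have h2n : (2 ^ n : ℤ) ≠ 0 := by positivity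
  have hcoboundary : ∀ a b c : M, d a - (2 ^ n : ℤ) • d b = (2 ^ (2 * n) : ℤ) • c →
      (2 ^ (2 * n) : ℤ) • c = d (a - (2 ^ n : ℤ) • b) := by
    intro a b c h
    rw [map_sub, map_zsmul, h]
  have hcocycle : ∀ a b c : M, c ∈ C (m + 1) →
      d a - (2 ^ n : ℤ) • d b = (2 ^ (2 * n) : ℤ) • c → d c = 0 := fun a b c hc h =>
    d_eq_zero_of_zsmul_eq_d hdd (htf _) (by positivity) (hd _ c hc) (hcoboundary a b c h)
  obtain ⟨w, hw, t, ht, hdz⟩ := hbeta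
  refine ⟨⟨z, hz, w, hw, ⟨0, zero_mem _, by rw [smul_zero, add_zero]⟩, t, ht, ?_⟩,
    ?_, ?_⟩
  · rw [hdz, hpow]
    module
  · intro z' hz' a ha b hb a' ha' b' hb' c hc c' hc'
    rintro ⟨u, -, t, ht, hzz'⟩ ⟨s, hs, has⟩ ⟨s', hs', has'⟩ hab ha'b'
    have hx : t + s - s' - (b - b') ∈ C m :=
      sub_mem (sub_mem (add_mem ht hs) hs') (sub_mem hb hb')
    have hdx := eq_of_zsmul_eq_zsmul_of_torsionFree (htf (m + 1)) h2n (hd m _ hx)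
      (zsmul_mem (sub_mem hc hc') _) <| zsmul_d_eq_zsmul_zsmul_sub_of_lifts hdd hzz' has has'
        (hpow ▸ hab) (hpow ▸ ha'b')
    exact ⟨hcocycle a b c hc hab, hcocycle a' b' c' hc' ha'b', _, hx, c - c',
      sub_mem hc hc', hdx, 0, zero_mem _, by rw [map_zero, add_zero]⟩
  · intro a ha b hb c _ _ hab
    exact ⟨_, sub_mem ha (zsmul_mem hb _), hcoboundary a b c hab⟩

/-- Well-definedness of the higher Bockstein `β̃₂` on `ker β`: for a cochain
complex of torsion-free abelian groups and an `m`-cocycle `z` of `C/2^nC` with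
`β[z] = 0`, (a) there are a lift `a` of `z` and `b ∈ C^m` with
`da − 2^n·db ∈ 2^(2n)·C^(m+1)`; (b) for any such choices the element
`(da − 2^n·db)/2^(2n)` is a cocycle whose class in `H^(m+1)(C)` modulo
`Im β̃` is independent of all choices; (c) `2^(2n)` times that class vanishes
in `H^(m+1)(C)`. -/
theorem higher_bockstein_beta_two_well_defined
    {M : Type*} [AddCommGroup M]
    (C : ℤ → AddSubgroup M)
    (d : M →+ M)
    (hd : ∀ (j : ℤ), ∀ x ∈ C j, d x ∈ C (j + 1))
    (hdd : ∀ x : M, d (d x) = 0)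
    (htf : ∀ (j : ℤ), ∀ x ∈ C j, ∀ q : ℤ, q • x = 0 → q = 0 ∨ x = 0)
    (m : ℤ) (n : ℕ) (hn : 1 ≤ n)
    (z : M) (hz : z ∈ C m)
    (hbeta : ∃ w ∈ C m, ∃ t ∈ C (m + 1),
      d z = (2 ^ n : ℤ) • (d w + (2 ^ n : ℤ) • t)) :
    -- (a) existence of suitable lifts
    ((∃ a ∈ C m, ∃ b ∈ C m, (∃ s ∈ C m, a = z + (2 ^ n : ℤ) • s) ∧
        ∃ c ∈ C (m + 1), d a - (2 ^ n : ℤ) • d b = (2 ^ (2 * n) : ℤ) • c) ∧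
    -- (b) independence of all choices, modulo Im β̃
    (∀ z' ∈ C m, ∀ a ∈ C m, ∀ b ∈ C m, ∀ a' ∈ C m, ∀ b' ∈ C m,
      ∀ c ∈ C (m + 1), ∀ c' ∈ C (m + 1),
      (∃ w ∈ C (m - 1), ∃ t ∈ C m, z - z' = d w + (2 ^ n : ℤ) • t) →
      (∃ s ∈ C m, a = z + (2 ^ n : ℤ) • s) →
      (∃ s ∈ C m, a' = z' + (2 ^ n : ℤ) • s) →
      d a - (2 ^ n : ℤ) • d b = (2 ^ (2 * n) : ℤ) • c →
      d a' - (2 ^ n : ℤ) • d b' = (2 ^ (2 * n) : ℤ) • c' →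
      d c = 0 ∧ d c' = 0 ∧
        ∃ x ∈ C m, ∃ y ∈ C (m + 1), d x = (2 ^ n : ℤ) • y ∧
          ∃ w ∈ C m, c - c' = y + d w) ∧
    -- (c) the image of β̃₂ is killed by 2^(2n)
    (∀ a ∈ C m, ∀ b ∈ C m, ∀ c ∈ C (m + 1),
      (∃ s ∈ C m, a = z + (2 ^ n : ℤ) • s) →
      d a - (2 ^ n : ℤ) • d b = (2 ^ (2 * n) : ℤ) • c →
      ∃ w ∈ C m, (2 ^ (2 * n) : ℤ) • c = d w)) :=
  higher_bockstein_beta_two_well_defined_general C d hd hdd htf m n z hz hbeta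
end

section
/- Fix integers m and n ≥ 1, and assume the abelian group H^{m+1}(C) is torsion-free. Then the connecting homomorphism β : H^m(C/2^nC) → H^{m+1}(C/2^nC) associated to the short exact sequence of complexes 0 → C/2^nC → C/2^{2n}C → C/2^nC → 0 (whose first map is multiplication by 2^n) is the zero map. -/
/-! From `dz = 2^n y` we get `2^n dy = d(dz) = 0`, so `y` is a cocycle by torsion-freeness of
`C^(m+2)`; its class is `2^n`-torsion in `H^(m+1)(C)`, hence zero, so the integral Bockstein
`β̃[z] = [y]` vanishes and with it its reduction `β[z]`. -/

theorem map_eq_zero_of_map_eq_zsmul {M : Type*} [AddCommGroup M] {d : M →+ M}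
    (hdd : ∀ x : M, d (d x) = 0) {S : AddSubgroup M}
    (htf : ∀ x ∈ S, ∀ q : ℤ, q • x = 0 → q = 0 ∨ x = 0)
    {z y : M} (hy : d y ∈ S) {q : ℤ} (hq : q ≠ 0) (hzy : d z = q • y) : d y = 0 := by
  have htorsion : q • d y = 0 := by rw [← map_zsmul, ← hzy, hdd]
  exact (htf _ hy q htorsion).resolve_left hq

theorem bockstein_vanishes_of_torsionfree_cohomology_general
    {M : Type*} [AddCommGroup M]
    (C : ℤ → AddSubgroup M)
    (d : M →+ M)
    (hd : ∀ (j : ℤ), ∀ x ∈ C j, d x ∈ C (j + 1))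
    (hdd : ∀ x : M, d (d x) = 0)
    (htf : ∀ (j : ℤ), ∀ x ∈ C j, ∀ q : ℤ, q • x = 0 → q = 0 ∨ x = 0)
    (m : ℤ) (n : ℕ)
    (hH : ∀ x ∈ C (m + 1), d x = 0 → ∀ q : ℤ, q ≠ 0 →
      (∃ w ∈ C m, q • x = d w) → ∃ w ∈ C m, x = d w) :
    ∀ z ∈ C m, ∀ y ∈ C (m + 1), d z = (2 ^ n : ℤ) • y →
      ∃ w ∈ C m, ∃ t ∈ C (m + 1), y = d w + (2 ^ n : ℤ) • t := by
  intro z hz y hy hzy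
  have hq : (2 : ℤ) ^ n ≠ 0 := by positivity
  have hcocycle : d y = 0 := map_eq_zero_of_map_eq_zsmul hdd (htf _) (hd _ y hy) hq hzy
  obtain ⟨w, hw, rfl⟩ := hH y hy hcocycle _ hq ⟨z, hz, hzy.symm⟩
  exact ⟨w, hw, 0, zero_mem _, by rw [smul_zero, add_zero]⟩

/-- Vanishing of the Bockstein into a torsion-free top degree: for a cochain
complex of torsion-free abelian groups, if `H^(m+1)(C)` is torsion-free then
the connecting homomorphism `β : H^m(C/2^nC) → H^(m+1)(C/2^nC)` for
`0 → C/2^nC → C/2^(2n)C → C/2^nC → 0` is zero: whenever `z ∈ C^m` satisfies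
`dz = 2^n·y`, the reduction of `y` is a coboundary of `C/2^nC`. -/
theorem bockstein_vanishes_of_torsionfree_cohomology
    {M : Type*} [AddCommGroup M]
    (C : ℤ → AddSubgroup M)
    (d : M →+ M)
    (hd : ∀ (j : ℤ), ∀ x ∈ C j, d x ∈ C (j + 1))
    (hdd : ∀ x : M, d (d x) = 0)
    (htf : ∀ (j : ℤ), ∀ x ∈ C j, ∀ q : ℤ, q • x = 0 → q = 0 ∨ x = 0)
    (m : ℤ) (n : ℕ) (hn : 1 ≤ n)
    (hH : ∀ x ∈ C (m + 1), d x = 0 → ∀ q : ℤ, q ≠ 0 →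
      (∃ w ∈ C m, q • x = d w) → ∃ w ∈ C m, x = d w) :
    ∀ z ∈ C m, ∀ y ∈ C (m + 1), d z = (2 ^ n : ℤ) • y →
      ∃ w ∈ C m, ∃ t ∈ C (m + 1), y = d w + (2 ^ n : ℤ) • t :=
  bockstein_vanishes_of_torsionfree_cohomology_general C d hd hdd htf m n hH
end

section
/- Fix integers n ≥ 1 and k, and assume the abelian group H^{4k+1}(C) is torsion-free. Let a, c ∈ C^{2k} and b, e ∈ C^{2k+1} satisfy da = 2^n·b and dc = 2^n·e. Then π_n(a·e) + π_n(c·b) is a degree-(4k+1) cocycle of the quotient complex C/2^nC whose cohomology class in H^{4k+1}(C/2^nC) is zero. (This is the skew-symmetry ⟨x, y⟩ + ⟨y, x⟩ = 0 of the pairing ⟨x, y⟩ := x ⌣ β(y) of Proposition 2.2, stated at the level of a differential graded ring with a commutativity homotopy.) -/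
/-!
Since `2^n` is not a zero divisor, `db = de = 0`. Then `d(a·e + c·b) = 2^n (b·e + e·b)
= 2^n d(b ⌣₁ e)`, so `x := a·e + c·b − 2^n (b ⌣₁ e)` is a cocycle of `C`, and the Leibniz
rule together with the homotopy formula for `b ⌣₁ c` gives `2^n x = d(a·c − 2^n (b ⌣₁ c))`.
As `H^{4k+1}(C)` is torsion-free, `x` is a coboundary, i.e. `a·e + c·b ≡ d w` modulo `2^n`.
-/

namespace DGRing

variable {A : Type*} [Ring A] (C : ℤ → AddSubgroup A) (d : A →+ A)

def IsLeibniz : Prop :=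
  ∀ (r : ℤ), ∀ x ∈ C r, ∀ y : A, d (x * y) = d x * y + (Int.negOnePow r : ℤ) • (x * d y)

def IsCup1Homotopy (cup1 : A →+ A →+ A) : Prop :=
  ∀ (r s : ℤ), ∀ u ∈ C r, ∀ v ∈ C s,
    d (cup1 u v) = - cup1 (d u) v + (Int.negOnePow (1 + r) : ℤ) • cup1 u (d v)
      + u * v - (Int.negOnePow (r * s) : ℤ) • (v * u)

variable {C}

theorem mul_mem_of_add_eq (hmul : ∀ (r s : ℤ), ∀ x ∈ C r, ∀ y ∈ C s, x * y ∈ C (r + s))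
    {r s t : ℤ} (hrst : r + s = t) {x y : A} (hx : x ∈ C r) (hy : y ∈ C s) : x * y ∈ C t :=
  hrst ▸ hmul r s x hx y hy

theorem cup1_mem_of_add_eq {cup1 : A →+ A →+ A}
    (hcup1_mem : ∀ (r s : ℤ), ∀ u ∈ C r, ∀ v ∈ C s, cup1 u v ∈ C (r + s - 1))
    {r s t : ℤ} (hrst : r + s - 1 = t) {u v : A} (hu : u ∈ C r) (hv : v ∈ C s) :
    cup1 u v ∈ C t :=
  hrst ▸ hcup1_mem r s u hu v hv

variable {d}

theorem d_eq_zero_of_d_eq_zsmul (hd : ∀ (j : ℤ), ∀ x ∈ C j, d x ∈ C (j + 1))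
    (hdd : ∀ x : A, d (d x) = 0)
    (htf : ∀ (j : ℤ), ∀ x ∈ C j, ∀ q : ℤ, q • x = 0 → q = 0 ∨ x = 0)
    {j q : ℤ} (hq : q ≠ 0) {a b : A} (hb : b ∈ C j) (hab : d a = q • b) : d b = 0 := by
  have hqdb : q • d b = 0 := by rw [← map_zsmul, ← hab, hdd]
  exact (htf (j + 1) (d b) (hd j b hb) q hqdb).resolve_left hq

theorem IsLeibniz.d_mul_of_even (hleibniz : IsLeibniz C d) {r : ℤ} (hr : Even r) {x : A}
    (hx : x ∈ C r) (y : A) : d (x * y) = d x * y + x * d y := by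
  rw [hleibniz r x hx y, Int.negOnePow_even r hr, Units.val_one, one_smul]

theorem IsCup1Homotopy.d_cup1_of_odd {cup1 : A →+ A →+ A} (hcup1 : IsCup1Homotopy C d cup1)
    {r s : ℤ} (hr : Odd r) {u v : A} (hu : u ∈ C r) (hdu : d u = 0) (hv : v ∈ C s) :
    d (cup1 u v) = cup1 u (d v) + u * v - (Int.negOnePow s : ℤ) • (v * u) := by
  have hsign : (r * s).negOnePow = s.negOnePow := by
    rw [Int.negOnePow_eq_iff, ← sub_one_mul]
    exact (hr.sub_odd odd_one).mul_right s
  rw [hcup1 r s u hu v hv, hdu, hsign, Int.negOnePow_even (1 + r) (odd_one.add_odd hr),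
    map_zero, AddMonoidHom.zero_apply, neg_zero, zero_add, Units.val_one, one_smul]

theorem IsLeibniz.d_mul_of_d_eq_zsmul (hleibniz : IsLeibniz C d) {r q : ℤ} (hr : Even r)
    {a b e : A} (ha : a ∈ C r) (hda : d a = q • b) (hde : d e = 0) :
    d (a * e) = q • (b * e) := by
  rw [hleibniz.d_mul_of_even hr ha, hda, hde, mul_zero, add_zero, smul_mul_assoc]

section Pairing

variable {cup1 : A →+ A →+ A} {r s q : ℤ} {a b c e : A}

theorem d_mul_add_mul_eq_zsmul_d_cup1 (hleibniz : IsLeibniz C d)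
    (hcup1 : IsCup1Homotopy C d cup1) (hr : Even r) (hs : Odd s) (ha : a ∈ C r) (hc : c ∈ C r)
    (hb : b ∈ C s) (he : e ∈ C s) (hda : d a = q • b) (hdc : d c = q • e) (hdb : d b = 0)
    (hde : d e = 0) : d (a * e + c * b) = q • d (cup1 b e) := by
  rw [map_add, hleibniz.d_mul_of_d_eq_zsmul hr ha hda hde,
    hleibniz.d_mul_of_d_eq_zsmul hr hc hdc hdb, hcup1.d_cup1_of_odd hs hb hdb he, hde,
    Int.negOnePow_odd s hs, map_zero, zero_add, Units.val_neg, Units.val_one, neg_one_smul,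
    sub_neg_eq_add, smul_add]

theorem zsmul_sub_cup1_eq_d (hleibniz : IsLeibniz C d) (hcup1 : IsCup1Homotopy C d cup1)
    (hr : Even r) (hs : Odd s) (ha : a ∈ C r) (hc : c ∈ C r) (hb : b ∈ C s)
    (hda : d a = q • b) (hdc : d c = q • e) (hdb : d b = 0) :
    q • (a * e + c * b - q • cup1 b e) = d (a * c - q • cup1 b c) := by
  rw [map_sub, map_zsmul, hleibniz.d_mul_of_even hr ha, hcup1.d_cup1_of_odd hs hb hdb hc, hda,
    hdc, Int.negOnePow_even r hr, Units.val_one, one_smul, map_zsmul, smul_mul_assoc,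
    mul_smul_comm]
  simp only [smul_sub, smul_add]
  abel

end Pairing

end DGRing

open DGRing

theorem pairing_skew_symmetric_general
    {A : Type*} [Ring A]
    (C : ℤ → AddSubgroup A)
    (d : A →+ A)
    (hd : ∀ (j : ℤ), ∀ x ∈ C j, d x ∈ C (j + 1))
    (hdd : ∀ x : A, d (d x) = 0)
    (hmul : ∀ (r s : ℤ), ∀ x ∈ C r, ∀ y ∈ C s, x * y ∈ C (r + s))
    (hleibniz : ∀ (r : ℤ), ∀ x ∈ C r, ∀ y : A,
      d (x * y) = d x * y + (Int.negOnePow r : ℤ) • (x * d y))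
    (cup1 : A →+ A →+ A)
    (hcup1_mem : ∀ (r s : ℤ), ∀ u ∈ C r, ∀ v ∈ C s, cup1 u v ∈ C (r + s - 1))
    (hcup1 : ∀ (r s : ℤ), ∀ u ∈ C r, ∀ v ∈ C s,
      d (cup1 u v) = - cup1 (d u) v + (Int.negOnePow (1 + r) : ℤ) • cup1 u (d v)
        + u * v - (Int.negOnePow (r * s) : ℤ) • (v * u))
    (htf : ∀ (j : ℤ), ∀ x ∈ C j, ∀ q : ℤ, q • x = 0 → q = 0 ∨ x = 0)
    (n : ℕ) (k : ℤ)
    (hH : ∀ x ∈ C (4 * k + 1), d x = 0 → ∀ q : ℤ, q ≠ 0 →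
      (∃ w ∈ C (4 * k), q • x = d w) → ∃ w ∈ C (4 * k), x = d w)
    (a c : A) (ha : a ∈ C (2 * k)) (hc : c ∈ C (2 * k))
    (b e : A) (hb : b ∈ C (2 * k + 1)) (he : e ∈ C (2 * k + 1))
    (hda : d a = (2 ^ n : ℤ) • b) (hdc : d c = (2 ^ n : ℤ) • e) :
    (∃ y ∈ C (4 * k + 2), d (a * e + c * b) = (2 ^ n : ℤ) • y) ∧
    (∃ w ∈ C (4 * k), ∃ t ∈ C (4 * k + 1),
      a * e + c * b = d w + (2 ^ n : ℤ) • t) := by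
  have h2n : (2 ^ n : ℤ) ≠ 0 := by positivity
  have hdb : d b = 0 := d_eq_zero_of_d_eq_zsmul hd hdd htf h2n hb hda
  have hde : d e = 0 := d_eq_zero_of_d_eq_zsmul hd hdd htf h2n he hdc
  have hr : Even (2 * k) := even_two_mul k
  have hs : Odd (2 * k + 1) := odd_two_mul_add_one k
  have hd_sum : d (a * e + c * b) = (2 ^ n : ℤ) • d (cup1 b e) :=
    d_mul_add_mul_eq_zsmul_d_cup1 hleibniz hcup1 hr hs ha hc hb he hda hdc hdb hde
  have hbe : cup1 b e ∈ C (4 * k + 1) := cup1_mem_of_add_eq hcup1_mem (by ring) hb he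
  refine ⟨⟨d (cup1 b e), by simpa [add_assoc] using hd _ _ hbe, hd_sum⟩, ?_⟩
  set x := a * e + c * b - (2 ^ n : ℤ) • cup1 b e
  have hx : x ∈ C (4 * k + 1) :=
    sub_mem (add_mem (mul_mem_of_add_eq hmul (by ring) ha he)
      (mul_mem_of_add_eq hmul (by ring) hc hb)) (zsmul_mem hbe _)
  have hdx : d x = 0 := by rw [map_sub, hd_sum, map_zsmul, sub_self]
  have hqx : ∃ w ∈ C (4 * k), (2 ^ n : ℤ) • x = d w :=
    ⟨_, sub_mem (mul_mem_of_add_eq hmul (by ring) ha hc)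
      (zsmul_mem (cup1_mem_of_add_eq hcup1_mem (by ring) hb hc) _),
      zsmul_sub_cup1_eq_d hleibniz hcup1 hr hs ha hc hb hda hdc hdb⟩
  obtain ⟨w, hw, hxw⟩ := hH x hx hdx _ h2n hqx
  exact ⟨w, hw, cup1 b e, hbe, sub_eq_iff_eq_add.mp hxw⟩

/-- Skew-symmetry of the pairing `⟨x, y⟩ = x ⌣ β(y)` at the level of a
ℤ-graded differential graded ring with a cup-1 commutativity homotopy: if
`H^(4k+1)(C)` is torsion-free, `a, c ∈ C^(2k)`, `b, e ∈ C^(2k+1)`,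
`da = 2^n·b` and `dc = 2^n·e`, then the reduction mod `2^n` of `a·e + c·b`
is a cocycle of `C/2^nC` whose class in `H^(4k+1)(C/2^nC)` vanishes. -/
theorem pairing_skew_symmetric
    {A : Type*} [Ring A]
    (C : ℤ → AddSubgroup A)
    (d : A →+ A)
    (hd : ∀ (j : ℤ), ∀ x ∈ C j, d x ∈ C (j + 1))
    (hdd : ∀ x : A, d (d x) = 0)
    (hone : (1 : A) ∈ C 0)
    (hmul : ∀ (r s : ℤ), ∀ x ∈ C r, ∀ y ∈ C s, x * y ∈ C (r + s))
    (hleibniz : ∀ (r : ℤ), ∀ x ∈ C r, ∀ y : A,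
      d (x * y) = d x * y + (Int.negOnePow r : ℤ) • (x * d y))
    (cup1 : A →+ A →+ A)
    (hcup1_mem : ∀ (r s : ℤ), ∀ u ∈ C r, ∀ v ∈ C s, cup1 u v ∈ C (r + s - 1))
    (hcup1 : ∀ (r s : ℤ), ∀ u ∈ C r, ∀ v ∈ C s,
      d (cup1 u v) = - cup1 (d u) v + (Int.negOnePow (1 + r) : ℤ) • cup1 u (d v)
        + u * v - (Int.negOnePow (r * s) : ℤ) • (v * u))
    (htf : ∀ (j : ℤ), ∀ x ∈ C j, ∀ q : ℤ, q • x = 0 → q = 0 ∨ x = 0)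
    (n : ℕ) (hn : 1 ≤ n) (k : ℤ)
    (hH : ∀ x ∈ C (4 * k + 1), d x = 0 → ∀ q : ℤ, q ≠ 0 →
      (∃ w ∈ C (4 * k), q • x = d w) → ∃ w ∈ C (4 * k), x = d w)
    (a c : A) (ha : a ∈ C (2 * k)) (hc : c ∈ C (2 * k))
    (b e : A) (hb : b ∈ C (2 * k + 1)) (he : e ∈ C (2 * k + 1))
    (hda : d a = (2 ^ n : ℤ) • b) (hdc : d c = (2 ^ n : ℤ) • e) :
    (∃ y ∈ C (4 * k + 2), d (a * e + c * b) = (2 ^ n : ℤ) • y) ∧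
    (∃ w ∈ C (4 * k), ∃ t ∈ C (4 * k + 1),
      a * e + c * b = d w + (2 ^ n : ℤ) • t) :=
  pairing_skew_symmetric_general C d hd hdd hmul hleibniz cup1 hcup1_mem hcup1 htf n k hH a c ha hc
    b e hb he hda hdc
end
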